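/- arXiv:2305.07550 — 12 statements merged into one kernel-verified Lean document; each statement's English description precedes it below -/
import Mathlib

section
/- Let α : ℝ → EuclideanSpace ℝ (Fin 3) be a unit-speed curve with orthonormal Frenet frame T = α', N, B = T × N, curvature κ > 0 and torsion τ satisfying the Frenet equations T' = κN, N' = −κT + τB, B' = −τN, and let x : ℝ → ℝ be an antiderivative of κ. Define T̄ = sin(x)·T + cos(x)·N, N̄ = B, B̄ = cos(x)·T − sin(x)·N, κ̄ = τ·cos(x) and τ̄ = τ·sin(x). Then B̄ = T̄ × N̄ and the frame {T̄, N̄, B̄} satisfies the Frenet equations T̄' = κ̄·N̄, N̄' = −κ̄·T̄ + τ̄·B̄, B̄' = −τ̄·N̄. In particular T̄, N̄, B̄, κ̄, τ̄ are the Frenet apparatus of the osculating mate β(s) = ∫(sin(x)T + cos(x)N) ds of α. -/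
open Real Matrix
open scoped RealInnerProductSpace

lemma bac_cab (u v w : Fin 3 → ℝ) :
    crossProduct u (crossProduct v w) =
      (u ⬝ᵥ w) • v - (u ⬝ᵥ v) • w := by
  ext i
  fin_cases i <;>
    simp [crossProduct, dotProduct, Fin.sum_univ_three] <;> ring

lemma cross_calc (T N : Fin 3 → ℝ) (a b : ℝ)
    (hTT : T ⬝ᵥ T = 1) (hNN : N ⬝ᵥ N = 1)
    (hTN : T ⬝ᵥ N = 0) (hNT : N ⬝ᵥ T = 0) :
    crossProduct (a • T + b • N) (crossProduct T N) = b • T - a • N := by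
  rw [map_add, _root_.map_smul, _root_.map_smul, LinearMap.add_apply, LinearMap.smul_apply,
    LinearMap.smul_apply, bac_cab, bac_cab, hTT, hNN, hTN, hNT]
  module

/-- If `α` is a unit-speed Frenet curve in `E³` with orthonormal Frenet
frame `T = α'`, `N`, `B = T × N`, curvature `κ > 0` and torsion `τ` satisfying the Frenet
equations, and `x` is an antiderivative of `κ`, then the frame
`T̄ = sin(x)T + cos(x)N`, `N̄ = B`, `B̄ = cos(x)T − sin(x)N` together with
`κ̄ = τ·cos(x)`, `τ̄ = τ·sin(x)` satisfies `B̄ = T̄ × N̄` and the Frenet equations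
`T̄' = κ̄N̄`, `N̄' = −κ̄T̄ + τ̄B̄`, `B̄' = −τ̄N̄`; these are the Frenet apparatus of the
osculating mate `β` of `α`, where `β' = sin(x)T + cos(x)N`. -/
theorem osculating_mate_frenet_apparatus
    (α β T N B : ℝ → EuclideanSpace ℝ (Fin 3)) (κ τ x : ℝ → ℝ)
    (hα : ContDiff ℝ (⊤ : ℕ∞) α)
    (hT : ∀ s, HasDerivAt α (T s) s)
    (hTT : ∀ s, ⟪T s, T s⟫ = 1) (hNN : ∀ s, ⟪N s, N s⟫ = 1)
    (hBB : ∀ s, ⟪B s, B s⟫ = 1)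
    (hTN : ∀ s, ⟪T s, N s⟫ = 0) (hTB : ∀ s, ⟪T s, B s⟫ = 0)
    (hNB : ∀ s, ⟪N s, B s⟫ = 0)
    (hB : ∀ s, B s = crossProduct (T s) (N s))
    (hκpos : ∀ s, 0 < κ s)
    (hT' : ∀ s, HasDerivAt T (κ s • N s) s)
    (hN' : ∀ s, HasDerivAt N (-(κ s) • T s + τ s • B s) s)
    (hB' : ∀ s, HasDerivAt B (-(τ s) • N s) s)
    (hx : ∀ s, HasDerivAt x (κ s) s)
    (Tb Nb Bb : ℝ → EuclideanSpace ℝ (Fin 3)) (κb τb : ℝ → ℝ)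
    (hTb : ∀ s, Tb s = Real.sin (x s) • T s + Real.cos (x s) • N s)
    (hNb : ∀ s, Nb s = B s)
    (hBb : ∀ s, Bb s = Real.cos (x s) • T s - Real.sin (x s) • N s)
    (hκb : ∀ s, κb s = τ s * Real.cos (x s))
    (hτb : ∀ s, τb s = τ s * Real.sin (x s))
    (hβ : ∀ s, HasDerivAt β (Tb s) s) :
    (∀ s, Bb s = crossProduct (Tb s) (Nb s)) ∧
    (∀ s, HasDerivAt Tb (κb s • Nb s) s) ∧
    (∀ s, HasDerivAt Nb (-(κb s) • Tb s + τb s • Bb s) s) ∧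
    (∀ s, HasDerivAt Bb (-(τb s) • Nb s) s) := by
  have dot_eq : ∀ u v : EuclideanSpace ℝ (Fin 3), dotProduct (α := ℝ) u.ofLp v.ofLp = ⟪u, v⟫ := by
    intro u v
    simp [dotProduct, PiLp.inner_apply, RCLike.inner_apply, mul_comm]
  have hTbfun : Tb = fun s => Real.sin (x s) • T s + Real.cos (x s) • N s := funext hTb
  have hNbfun : Nb = fun s => B s := funext hNb
  have hBbfun : Bb = fun s => Real.cos (x s) • T s - Real.sin (x s) • N s := funext hBb
  refine ⟨?_, ?_, ?_, ?_⟩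
  · intro s
    have h := cross_calc (T s) (N s) (Real.sin (x s)) (Real.cos (x s))
      (by rw [dot_eq]; exact hTT s) (by rw [dot_eq]; exact hNN s)
      (by rw [dot_eq]; exact hTN s)
      (by rw [dot_eq, real_inner_comm]; exact hTN s)
    rw [hBb, hTb, hNb, hB]
    exact h.symm
  · intro s
    have h := ((hx s).sin.smul (hT' s)).add ((hx s).cos.smul (hN' s))
    rw [hTbfun]
    convert h using 1
    any_goals rfl
    rw [hκb, hNb]
    match_scalars <;> ring
  · intro s
    rw [hNbfun]
    convert hB' s using 1
    rw [hκb, hτb, hTb, hBb]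
    have hpy := sin_sq_add_cos_sq (x s)
    match_scalars
    · ring
    · linear_combination (-(τ s)) * hpy
  · intro s
    have h := ((hx s).cos.smul (hT' s)).sub ((hx s).sin.smul (hN' s))
    rw [hBbfun]
    convert h using 1
    any_goals rfl
    rw [hτb, hNb]
    match_scalars <;> ring
end

section
/- Let κ, τ, x : ℝ → ℝ be smooth with κ(s) > 0 and x'(s) = κ(s) for all s, let ε₁ ∈ {−1, 1}, and set κ̄(s) = ε₁·τ(s)·cos(x(s)) and τ̄(s) = τ(s)·sin(x(s)). Assume κ̄(s) > 0 for all s (so in particular τ(s) ≠ 0 and cos(x(s)) ≠ 0). Then for all s: κ(s) = ε₁ · (κ̄(s)²/(κ̄(s)² + τ̄(s)²)) · (τ̄/κ̄)'(s) and τ(s)² = κ̄(s)² + τ̄(s)². -/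
open Real

/-- With `κ̄ = ε₁·τ·cos(x)` and `τ̄ = τ·sin(x)` the curvature and torsion
of the osculating mate (`x' = κ`, `κ̄ > 0`), the curvatures of the base curve satisfy
`κ = ε₁·(κ̄²/(κ̄² + τ̄²))·(τ̄/κ̄)'` and `τ² = κ̄² + τ̄²`. -/
theorem osculating_mate_base_curvatures
    (κ τ x : ℝ → ℝ)
    (hκ : ContDiff ℝ (⊤ : ℕ∞) κ) (hτ : ContDiff ℝ (⊤ : ℕ∞) τ)
    (hx : ContDiff ℝ (⊤ : ℕ∞) x)
    (hκpos : ∀ s, 0 < κ s) (hx' : ∀ s, deriv x s = κ s)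
    (ε₁ : ℝ) (hε : ε₁ = -1 ∨ ε₁ = 1)
    (κb τb : ℝ → ℝ)
    (hκb : ∀ s, κb s = ε₁ * τ s * Real.cos (x s))
    (hτb : ∀ s, τb s = τ s * Real.sin (x s))
    (hκbpos : ∀ s, 0 < κb s) :
    ∀ s, κ s = ε₁ * (κb s ^ 2 / (κb s ^ 2 + τb s ^ 2)) * deriv (fun t => τb t / κb t) s ∧
      τ s ^ 2 = κb s ^ 2 + τb s ^ 2 := by
  have hε2 : ε₁ * ε₁ = 1 := by rcases hε with h | h <;> simp [h]
  have hεne : ε₁ ≠ 0 := by rcases hε with h | h <;> simp [h]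
  have hτne : ∀ t, τ t ≠ 0 := by
    intro t h
    have := hκbpos t
    rw [hκb t, h] at this
    simp at this
  have hcosne : ∀ t, Real.cos (x t) ≠ 0 := by
    intro t h
    have := hκbpos t
    rw [hκb t, h] at this
    simp at this
  have hfun : (fun t => τb t / κb t) = fun t => ε₁ * Real.tan (x t) := by
    funext t
    have h1 : ε₁ * τ t * Real.cos (x t) ≠ 0 := by rw [← hκb t]; exact (hκbpos t).ne'
    rw [hτb t, hκb t, Real.tan_eq_sin_div_cos, mul_div_assoc', div_eq_div_iff h1 (hcosne t)]
    linear_combination (-(τ t * Real.sin (x t) * Real.cos (x t))) * hε2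
  intro s
  have hxd : HasDerivAt x (κ s) s := by
    have := (hx.differentiable (by simp) s).hasDerivAt
    rwa [hx' s] at this
  have hd : HasDerivAt (fun t => ε₁ * Real.tan (x t)) (ε₁ * (1 / Real.cos (x s) ^ 2 * κ s)) s :=
    (((Real.hasDerivAt_tan (hcosne s)).comp s hxd)).const_mul ε₁
  have hder : deriv (fun t => τb t / κb t) s = ε₁ * (1 / Real.cos (x s) ^ 2 * κ s) := by
    rw [hfun]; exact hd.deriv
  have hsum : κb s ^ 2 + τb s ^ 2 = τ s ^ 2 := by
    rw [hκb s, hτb s]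
    have hε2' : ε₁ ^ 2 = 1 := by rw [sq]; exact hε2
    linear_combination τ s ^ 2 * Real.cos (x s) ^ 2 * hε2' + τ s ^ 2 * Real.sin_sq_add_cos_sq (x s)
  refine ⟨?_, hsum.symm⟩
  rw [hder, hsum, hκb s]
  have hcos2 : Real.cos (x s) ^ 2 ≠ 0 := pow_ne_zero _ (hcosne s)
  have hτ2 : τ s ^ 2 ≠ 0 := pow_ne_zero _ (hτne s)
  have hε2' : ε₁ ^ 2 = 1 := by rw [sq]; exact hε2
  field_simp
  have hτi : τ s * (τ s)⁻¹ = 1 := mul_inv_cancel₀ (hτne s)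
  have hci : Real.cos (x s) * (Real.cos (x s))⁻¹ = 1 := mul_inv_cancel₀ (hcosne s)
  linear_combination (-(κ s) * (ε₁ ^ 2 + 1)) * hε2' - κ s * ε₁ ^ 4 * hτi - κ s * ε₁ ^ 4 * τ s * (τ s)⁻¹ * hci
end

section
/- Let κ, τ, x : ℝ → ℝ be smooth with κ(s) > 0, τ(s) > 0 and x'(s) = κ(s) for all s, let ε₁ ∈ {−1, 1}, and set κ̄ = ε₁·τ·cos(x), τ̄ = τ·sin(x), assuming κ̄(s) > 0 for all s. Define σ̄ = (κ̄²/(κ̄² + τ̄²)^(3/2))·(τ̄/κ̄)'. Then κ(s)/τ(s) = ε₁·σ̄(s) for all s; consequently, the function τ/κ is constant if and only if the function σ̄ is constant (i.e., α is a general helix if and only if its osculating mate β is a slant helix). -/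
open Real

/-- With `κ̄ = ε₁·τ·cos(x)`, `τ̄ = τ·sin(x)` (`x' = κ > 0`, `τ > 0`,
`κ̄ > 0`) and `σ̄ = (κ̄²/(κ̄² + τ̄²)^(3/2))·(τ̄/κ̄)'`, one has `κ/τ = ε₁·σ̄`; hence `τ/κ`
is constant iff `σ̄` is constant, i.e. `α` is a general helix iff its osculating mate `β`
is a slant helix. -/
theorem helix_iff_osculating_mate_slant_helix
    (κ τ x : ℝ → ℝ)
    (hκ : ContDiff ℝ (⊤ : ℕ∞) κ) (hτ : ContDiff ℝ (⊤ : ℕ∞) τ)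
    (hx : ContDiff ℝ (⊤ : ℕ∞) x)
    (hκpos : ∀ s, 0 < κ s) (hτpos : ∀ s, 0 < τ s) (hx' : ∀ s, deriv x s = κ s)
    (ε₁ : ℝ) (hε : ε₁ = -1 ∨ ε₁ = 1)
    (κb τb σb : ℝ → ℝ)
    (hκb : ∀ s, κb s = ε₁ * τ s * Real.cos (x s))
    (hτb : ∀ s, τb s = τ s * Real.sin (x s))
    (hκbpos : ∀ s, 0 < κb s)
    (hσb : ∀ s, σb s =
      κb s ^ 2 / (κb s ^ 2 + τb s ^ 2) ^ ((3 : ℝ) / 2) * deriv (fun t => τb t / κb t) s) :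
    (∀ s, κ s / τ s = ε₁ * σb s) ∧
      ((∃ c : ℝ, ∀ s, τ s / κ s = c) ↔ (∃ c : ℝ, ∀ s, σb s = c)) := by
  have hεsq : ε₁ ^ 2 = 1 := by rcases hε with h | h <;> rw [h] <;> norm_num
  have hεne : ε₁ ≠ 0 := by rcases hε with h | h <;> rw [h] <;> norm_num
  have hcos : ∀ s, Real.cos (x s) ≠ 0 := by
    intro s h
    have := hκbpos s
    rw [hκb s, h] at this
    simp at this
  have hxd : ∀ s, HasDerivAt x (κ s) s := by
    intro s
    have h := ((hx.differentiable (by simp)) s).hasDerivAt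
    rwa [hx' s] at h
  have hf : (fun t => τb t / κb t) = fun t => ε₁ * Real.tan (x t) := by
    funext t
    rw [hτb, hκb, Real.tan_eq_sin_div_cos]
    have ht := (hτpos t).ne'
    have hc := hcos t
    field_simp
    linear_combination (-Real.sin (x t)) * hεsq
  have hmain : ∀ s, κ s / τ s = ε₁ * σb s := by
    intro s
    have hder : deriv (fun t => τb t / κb t) s = ε₁ * (1 / Real.cos (x s) ^ 2 * κ s) := by
      rw [hf]
      have h1 : HasDerivAt (fun t => Real.tan (x t)) (1 / Real.cos (x s) ^ 2 * κ s) s :=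
        (Real.hasDerivAt_tan (hcos s)).comp s (hxd s)
      exact (h1.const_mul ε₁).deriv
    have hsum : κb s ^ 2 + τb s ^ 2 = τ s ^ 2 := by
      rw [hκb, hτb]
      have h2 := Real.sin_sq_add_cos_sq (x s)
      linear_combination (τ s ^ 2 * Real.cos (x s) ^ 2) * hεsq + τ s ^ 2 * h2
    have hrpow : (τ s ^ 2 : ℝ) ^ ((3 : ℝ) / 2) = τ s ^ 3 := by
      rw [← Real.rpow_natCast (τ s) 2, ← Real.rpow_mul (hτpos s).le]
      norm_num
    rw [hσb, hder, hsum, hrpow, hκb]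
    have ht := (hτpos s).ne'
    have hc := hcos s
    field_simp
    linear_combination (-(κ s * (ε₁ ^ 2 + 1))) * hεsq
  refine ⟨hmain, ?_⟩
  constructor
  · rintro ⟨c, hc⟩
    have hc0 : c ≠ 0 := by
      have h0 := hc 0
      intro h; rw [h] at h0
      exact absurd h0 (div_pos (hτpos 0) (hκpos 0)).ne'
    refine ⟨ε₁ / c, fun s => ?_⟩
    have h1 := hmain s
    have h2 := hc s
    have hκ0 := (hκpos s).ne'
    have hτ0 := (hτpos s).ne'
    field_simp at h1 h2 ⊢
    have h4 : (ε₁ * σb s * c) * κ s = 1 * κ s := by linear_combination -h1 - ε₁ * σb s * h2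
    have h5 := mul_right_cancel₀ hκ0 h4
    linear_combination ε₁ * h5 - σb s * c * hεsq
  · rintro ⟨c, hc⟩
    have hc0 : ε₁ * c ≠ 0 := by
      have h0 := hmain 0
      rw [hc 0] at h0
      intro h; rw [h] at h0
      exact absurd h0 (div_pos (hκpos 0) (hτpos 0)).ne'
    refine ⟨1 / (ε₁ * c), fun s => ?_⟩
    have h1 := hmain s
    rw [hc s] at h1
    have hκ0 := (hκpos s).ne'
    have hτ0 := (hτpos s).ne'
    field_simp at h1 ⊢
    have hc1 : c ≠ 0 := right_ne_zero_of_mul hc0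
    have hci : c * c⁻¹ = 1 := mul_inv_cancel₀ hc1
    linear_combination (-c⁻¹) * h1 - (τ s * ε₁) * hci
end

section
/- Let κ, τ, x : ℝ → ℝ with τ continuous, x differentiable and x'(s) = κ(s) > 0 for all s, and set τ̄(s) = τ(s)·sin(x(s)). Then τ̄(s) = 0 for all s ∈ ℝ if and only if τ(s) = 0 for all s ∈ ℝ. (That is, a Frenet curve α is a plane curve if and only if its osculating mate β is a plane curve.) -/
open Real

/-- With `τ` continuous, `x` differentiable with `x' = κ > 0`, and
`τ̄ = τ·sin(x)`, one has `τ̄ ≡ 0` iff `τ ≡ 0`; i.e. a Frenet curve `α` is a plane curve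
iff its osculating mate `β` is a plane curve. -/
theorem plane_iff_osculating_mate_plane
    (κ τ x : ℝ → ℝ)
    (hτ : Continuous τ)
    (hx : ∀ s, HasDerivAt x (κ s) s)
    (hκpos : ∀ s, 0 < κ s)
    (τb : ℝ → ℝ)
    (hτb : ∀ s, τb s = τ s * Real.sin (x s)) :
    (∀ s : ℝ, τb s = 0) ↔ (∀ s : ℝ, τ s = 0) := by
  constructor
  · intro h s
    by_contra hτs
    -- τ ≠ 0 in a neighborhood of s
    have hev : ∀ᶠ t in nhds s, τ t ≠ 0 := hτ.continuousAt.eventually_ne hτs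
    rw [Metric.eventually_nhds_iff] at hev
    obtain ⟨ε, hε, hne⟩ := hev
    -- sin (x t) = 0 near s
    have hsin : ∀ t : ℝ, dist t s < ε → Real.sin (x t) = 0 := by
      intro t ht
      have := h t
      rw [hτb t] at this
      exact (mul_eq_zero.1 this).resolve_left (hne ht)
    -- x is continuous and strictly monotone
    have hxd : Differentiable ℝ x := fun t => (hx t).differentiableAt
    have hxc : Continuous x := hxd.continuous
    have hmono : StrictMono x := by
      apply strictMono_of_deriv_pos
      intro t
      rw [(hx t).deriv]
      exact hκpos t
    set a := s
    set b := s + ε / 2 with hb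
    have hab : a < b := by simp [hb, a]; linarith
    have hxab : x a < x b := hmono hab
    have hsa : Real.sin (x a) = 0 := hsin a (by simp [a, hε])
    -- x a = k π
    obtain ⟨k, hk⟩ := Real.sin_eq_zero_iff.1 hsa
    set d := min π (x b - x a) with hd
    have hdpos : 0 < d := lt_min Real.pi_pos (by linarith)
    set c := x a + d / 2 with hc
    have hc1 : x a < c := by simp [hc]; linarith
    have hc2 : c < x b := by
      have : d ≤ x b - x a := min_le_right _ _
      simp only [hc]; linarith
    -- by IVT, c is a value of x on [a, b]
    have : c ∈ Set.image x (Set.Icc a b) := by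
      apply intermediate_value_Icc hab.le (hxc.continuousOn)
      exact ⟨hc1.le, hc2.le⟩
    obtain ⟨t, ht, hxt⟩ := this
    have ha : a = s := rfl
    have htdist : dist t s < ε := by
      rw [Real.dist_eq, abs_lt]
      obtain ⟨h1, h2⟩ := ht
      have h1' : s ≤ t := ha ▸ h1
      have h2' : t ≤ s + ε / 2 := hb ▸ h2
      constructor <;> linarith
    have hsint : Real.sin (x t) = 0 := hsin t htdist
    -- but sin c ≠ 0
    have : Real.sin c = Real.sin (d / 2 + k * π) := by rw [hc, ← hk]; ring_nf
    have hsc : Real.sin c ≠ 0 := by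
      rw [this, Real.sin_add_int_mul_pi]
      have : 0 < Real.sin (d / 2) :=
        Real.sin_pos_of_pos_of_lt_pi (by linarith) (by
          have : d ≤ π := min_le_left _ _
          linarith [Real.pi_pos])
      have hz : ((-1 : ℝ)) ^ k ≠ 0 := by
        apply zpow_ne_zero; norm_num
      positivity
    rw [hxt] at hsint
    exact hsc hsint
  · intro h s
    rw [hτb, h s, zero_mul]
end

section
/- Let κ, τ, x : ℝ → ℝ be smooth with κ(s) > 0, x'(s) = κ(s), τ(s)·cos(x(s)) ≠ 0 and τ(s)·sin(x(s)) ≠ 0 for all s, let ε₁ ∈ {−1,1}, and set κ̄ = ε₁·τ·cos(x), τ̄ = τ·sin(x), p̄ = 1/κ̄, q̄ = 1/τ̄. Let a > 0. Then p̄(s)² + (p̄'(s)·q̄(s))² = a² for all s if and only if ((τ·cos∘x)'(s))² = τ(s)⁴·sin²(x(s))·cos²(x(s))·(a²·τ(s)²·cos²(x(s)) − 1) for all s. (That is, the osculating mate β lies on a sphere of radius a if and only if the curvatures of α satisfy this differential relation.) -/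
open Real

/-- With `κ̄ = ε₁·τ·cos(x)`, `τ̄ = τ·sin(x)` (`x' = κ > 0`,
`τ·cos(x) ≠ 0`, `τ·sin(x) ≠ 0`), `p̄ = 1/κ̄`, `q̄ = 1/τ̄` and `a > 0`, the osculating mate
`β` lies on a sphere of radius `a`, i.e. `p̄² + (p̄'·q̄)² = a²`, iff
`((τ·cos∘x)')² = τ⁴·sin²(x)·cos²(x)·(a²τ²cos²(x) − 1)`. -/
theorem osculating_mate_spherical_iff
    (κ τ x : ℝ → ℝ)
    (hκ : ContDiff ℝ (⊤ : ℕ∞) κ) (hτ : ContDiff ℝ (⊤ : ℕ∞) τ)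
    (hx : ContDiff ℝ (⊤ : ℕ∞) x)
    (hκpos : ∀ s, 0 < κ s) (hx' : ∀ s, deriv x s = κ s)
    (hcos : ∀ s, τ s * Real.cos (x s) ≠ 0)
    (hsin : ∀ s, τ s * Real.sin (x s) ≠ 0)
    (ε₁ : ℝ) (hε : ε₁ = -1 ∨ ε₁ = 1)
    (κb τb pb qb : ℝ → ℝ)
    (hκb : ∀ s, κb s = ε₁ * τ s * Real.cos (x s))
    (hτb : ∀ s, τb s = τ s * Real.sin (x s))
    (hpb : ∀ s, pb s = 1 / κb s)
    (hqb : ∀ s, qb s = 1 / τb s)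
    (a : ℝ) (ha : 0 < a) :
    (∀ s, pb s ^ 2 + (deriv pb s * qb s) ^ 2 = a ^ 2) ↔
      (∀ s, (deriv (fun t => τ t * Real.cos (x t)) s) ^ 2 =
        τ s ^ 4 * Real.sin (x s) ^ 2 * Real.cos (x s) ^ 2 *
          (a ^ 2 * τ s ^ 2 * Real.cos (x s) ^ 2 - 1)) := by

  have hε0 : ε₁ ≠ 0 := by rcases hε with h | h <;> rw [h] <;> norm_num
  have hε2 : ε₁ ^ 2 = 1 := by rcases hε with h | h <;> rw [h] <;> norm_num
  have hfd : Differentiable ℝ (fun t => τ t * Real.cos (x t)) :=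
    (hτ.differentiable (by simp)).mul
      (Real.differentiable_cos.comp (hx.differentiable (by simp)))
  have hpbeq : pb = fun t => (ε₁ * (τ t * Real.cos (x t)))⁻¹ := by
    funext t
    rw [hpb, hκb, one_div, mul_assoc]
  have hderiv : ∀ s, deriv pb s =
      -(ε₁ * deriv (fun t => τ t * Real.cos (x t)) s) /
        (ε₁ * (τ s * Real.cos (x s))) ^ 2 := by
    intro s
    rw [hpbeq]
    have h1 : HasDerivAt (fun t => τ t * Real.cos (x t))
        (deriv (fun t => τ t * Real.cos (x t)) s) s := (hfd s).hasDerivAt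
    have h2 := (h1.const_mul ε₁).inv (by
      exact mul_ne_zero hε0 (hcos s))
    exact h2.deriv
  constructor
  · intro h s
    have hs := h s
    rw [hderiv s, hpbeq, hqb, hτb] at hs
    simp only at hs
    have hc := hcos s
    have hsn := hsin s
    have hC : (τ s * Real.cos (x s)) ^ 2 ≠ 0 := pow_ne_zero 2 hc
    set F := deriv (fun t => τ t * Real.cos (x t)) s
    have hτ0 : τ s ≠ 0 := left_ne_zero_of_mul hc
    have hc0 : Real.cos (x s) ≠ 0 := right_ne_zero_of_mul hc
    have hs0 : Real.sin (x s) ≠ 0 := right_ne_zero_of_mul hsn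
    field_simp at hs ⊢
    simp only [mul_pow, hε2, one_mul] at hs
    apply mul_right_cancel₀ hC
    linear_combination (τ s * Real.cos (x s)) ^ 2 * hs
  · intro h s
    have hs := h s
    rw [hderiv s, hpbeq, hqb, hτb]
    simp only
    have hc := hcos s
    have hsn := hsin s
    set F := deriv (fun t => τ t * Real.cos (x t)) s
    have hτ0 : τ s ≠ 0 := left_ne_zero_of_mul hc
    have hc0 : Real.cos (x s) ≠ 0 := right_ne_zero_of_mul hc
    have hs0 : Real.sin (x s) ≠ 0 := right_ne_zero_of_mul hsn
    field_simp
    simp only [mul_pow, hε2, one_mul]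
    linear_combination hs
end

section
/- Let κ, τ, x : ℝ → ℝ be smooth with κ(s) > 0, x'(s) = κ(s), τ(s) ≠ 0 and cos(x(s)) ≠ 0 for all s, let ε₁ ∈ {−1,1}, and set κ̄ = ε₁·τ·cos(x), τ̄ = τ·sin(x). Then there exist real constants c ≠ 0 and b with c·τ̄(s) = (s + b)·κ̄(s) for all s (i.e., the osculating mate β is a rectifying curve) if and only if there exist real constants a₁ ≠ 0 and a₂ such that ε₁·tan(x(s)) = a₁·s + a₂ for all s (i.e., tan(∫κ ds) is a nonconstant linear function of s). -/
open Real

/-- With `κ̄ = ε₁·τ·cos(x)`, `τ̄ = τ·sin(x)` (`x' = κ > 0`, `τ ≠ 0`,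
`cos(x) ≠ 0`), the osculating mate `β` is a rectifying curve, i.e.
`c·τ̄(s) = (s + b)·κ̄(s)` for some constants `c ≠ 0`, `b`, iff `ε₁·tan(x(s))` is a
nonconstant linear function `a₁·s + a₂` of `s`. -/
theorem osculating_mate_rectifying_iff
    (κ τ x : ℝ → ℝ)
    (hκ : ContDiff ℝ (⊤ : ℕ∞) κ) (hτ : ContDiff ℝ (⊤ : ℕ∞) τ)
    (hx : ContDiff ℝ (⊤ : ℕ∞) x)
    (hκpos : ∀ s, 0 < κ s) (hx' : ∀ s, deriv x s = κ s)
    (hτne : ∀ s, τ s ≠ 0) (hcos : ∀ s, Real.cos (x s) ≠ 0)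
    (ε₁ : ℝ) (hε : ε₁ = -1 ∨ ε₁ = 1)
    (κb τb : ℝ → ℝ)
    (hκb : ∀ s, κb s = ε₁ * τ s * Real.cos (x s))
    (hτb : ∀ s, τb s = τ s * Real.sin (x s)) :
    (∃ c b : ℝ, c ≠ 0 ∧ ∀ s, c * τb s = (s + b) * κb s) ↔
      (∃ a₁ a₂ : ℝ, a₁ ≠ 0 ∧ ∀ s, ε₁ * Real.tan (x s) = a₁ * s + a₂) := by
  have hε2 : ε₁ * ε₁ = 1 := by rcases hε with h | h <;> rw [h] <;> ring
  have hεne : ε₁ ≠ 0 := by rcases hε with h | h <;> rw [h] <;> norm_num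
  constructor
  · rintro ⟨c, b, hc, h⟩
    refine ⟨1/c, b/c, by positivity, fun s => ?_⟩
    have h0 := h s
    rw [hτb s, hκb s] at h0
    have h1 : c * Real.sin (x s) = (s + b) * ε₁ * Real.cos (x s) :=
      mul_left_cancel₀ (hτne s) (by linarith [h0, mul_comm (τ s) (c * Real.sin (x s))] <;> ring)
    rw [Real.tan_eq_sin_div_cos]
    have hcs := hcos s
    field_simp
    linear_combination ε₁ * h1 + (s + b) * Real.cos (x s) * hε2
  · rintro ⟨a₁, a₂, ha, h⟩
    refine ⟨1/a₁, a₂/a₁, by positivity, fun s => ?_⟩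
    have h0 := h s
    rw [Real.tan_eq_sin_div_cos] at h0
    rw [hτb s, hκb s]
    have hcs := hcos s
    have h1 : ε₁ * Real.sin (x s) = (a₁ * s + a₂) * Real.cos (x s) := by
      field_simp at h0; linarith [h0]
    field_simp
    linear_combination (τ s * ε₁) * h1 - τ s * Real.sin (x s) * hε2
end

section
/- Let α : ℝ → EuclideanSpace ℝ (Fin 3) be a unit-speed curve with orthonormal Frenet frame T, N, B satisfying T' = κN, N' = −κT + τB, B' = −τN with κ > 0, let x be an antiderivative of κ, and assume τ(s)·cos(x(s)) ≠ 0 for all s. Let β : ℝ → EuclideanSpace ℝ (Fin 3) be smooth with β'(s) = sin(x(s))·T(s) + cos(x(s))·N(s), write a₁ = ⟨β, T⟩, a₂ = ⟨β, N⟩, a₃ = ⟨β, B⟩, and let D(s) = ⟨β(s), β(s)⟩ (so D = d² where d = ‖β‖). Then for all s: (i) a₁' − a₂κ = sin(x), a₁κ + a₂' − a₃τ = cos(x), a₂τ + a₃' = 0; (ii) D'/2 = a₁·sin(x) + a₂·cos(x); (iii) a₃ = ((D'/2)' − 1)/(τ·cos(x)); and (iv) a₂ = −a₃'/τ and a₁'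 = −(κ/τ)·a₃' + sin(x). -/
open Real
open scoped RealInnerProductSpace

/-- Components `a₁ = ⟨β,T⟩`, `a₂ = ⟨β,N⟩`, `a₃ = ⟨β,B⟩` of the position
vector of the osculating mate `β` (with `β' = sin(x)T + cos(x)N`, `x' = κ`,
`τ·cos(x) ≠ 0`) of a unit-speed Frenet curve `α` satisfy the system
`a₁' − a₂κ = sin(x)`, `a₁κ + a₂' − a₃τ = cos(x)`, `a₂τ + a₃' = 0`, and with
`D = ⟨β,β⟩ = d²` one has `D'/2 = a₁sin(x) + a₂cos(x)`,
`a₃ = ((D'/2)' − 1)/(τcos(x))`, `a₂ = −a₃'/τ` and `a₁' = −(κ/τ)a₃' + sin(x)`. -/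
theorem osculating_mate_position_components
    (α β T N B : ℝ → EuclideanSpace ℝ (Fin 3)) (κ τ x : ℝ → ℝ)
    (hα : ContDiff ℝ (⊤ : ℕ∞) α) (hβ : ContDiff ℝ (⊤ : ℕ∞) β)
    (hT : ∀ s, HasDerivAt α (T s) s)
    (hTT : ∀ s, ⟪T s, T s⟫ = 1) (hNN : ∀ s, ⟪N s, N s⟫ = 1)
    (hBB : ∀ s, ⟪B s, B s⟫ = 1)
    (hTN : ∀ s, ⟪T s, N s⟫ = 0) (hTB : ∀ s, ⟪T s, B s⟫ = 0)
    (hNB : ∀ s, ⟪N s, B s⟫ = 0)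
    (hκpos : ∀ s, 0 < κ s)
    (hT' : ∀ s, HasDerivAt T (κ s • N s) s)
    (hN' : ∀ s, HasDerivAt N (-(κ s) • T s + τ s • B s) s)
    (hB' : ∀ s, HasDerivAt B (-(τ s) • N s) s)
    (hx : ∀ s, HasDerivAt x (κ s) s)
    (hτcos : ∀ s, τ s * Real.cos (x s) ≠ 0)
    (hβ' : ∀ s, HasDerivAt β (Real.sin (x s) • T s + Real.cos (x s) • N s) s)
    (a₁ a₂ a₃ D : ℝ → ℝ)
    (ha₁ : ∀ s, a₁ s = ⟪β s, T s⟫) (ha₂ : ∀ s, a₂ s = ⟪β s, N s⟫)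
    (ha₃ : ∀ s, a₃ s = ⟪β s, B s⟫) (hD : ∀ s, D s = ⟪β s, β s⟫) :
    ∀ s,
      (deriv a₁ s - a₂ s * κ s = Real.sin (x s) ∧
        a₁ s * κ s + deriv a₂ s - a₃ s * τ s = Real.cos (x s) ∧
        a₂ s * τ s + deriv a₃ s = 0) ∧
      deriv D s / 2 = a₁ s * Real.sin (x s) + a₂ s * Real.cos (x s) ∧
      a₃ s = (deriv (fun t => deriv D t / 2) s - 1) / (τ s * Real.cos (x s)) ∧
      (a₂ s = -(deriv a₃ s) / τ s ∧
        deriv a₁ s = -(κ s / τ s) * deriv a₃ s + Real.sin (x s)) := by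
  have hA1 : a₁ = fun s => ⟪β s, T s⟫ := funext ha₁
  have hA2 : a₂ = fun s => ⟪β s, N s⟫ := funext ha₂
  have hA3 : a₃ = fun s => ⟪β s, B s⟫ := funext ha₃
  have hDD : D = fun s => ⟪β s, β s⟫ := funext hD
  subst hA1 hA2 hA3 hDD
  -- derivatives of the components
  have da₁ : ∀ s, HasDerivAt (fun s => (⟪β s, T s⟫ : ℝ))
      (Real.sin (x s) + κ s * ⟪β s, N s⟫) s := by
    intro s
    have h := HasDerivAt.inner ℝ (hβ' s) (hT' s)
    refine h.congr_deriv ?_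
    simp only [inner_add_left, real_inner_smul_left, real_inner_smul_right]
    rw [hTT s, real_inner_comm (T s) (N s), hTN s]
    ring
  have da₂ : ∀ s, HasDerivAt (fun s => (⟪β s, N s⟫ : ℝ))
      (Real.cos (x s) - κ s * ⟪β s, T s⟫ + τ s * ⟪β s, B s⟫) s := by
    intro s
    have h := HasDerivAt.inner ℝ (hβ' s) (hN' s)
    refine h.congr_deriv ?_
    simp only [inner_add_left, inner_add_right, real_inner_smul_left, real_inner_smul_right]
    rw [hTN s, hNN s]
    ring
  have da₃ : ∀ s, HasDerivAt (fun s => (⟪β s, B s⟫ : ℝ))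
      (-(τ s * ⟪β s, N s⟫)) s := by
    intro s
    have h := HasDerivAt.inner ℝ (hβ' s) (hB' s)
    refine h.congr_deriv ?_
    simp only [inner_add_left, real_inner_smul_left, real_inner_smul_right]
    rw [hTB s, hNB s]
    ring
  have dDfun : ∀ s, HasDerivAt (fun s => (⟪β s, β s⟫ : ℝ))
      (2 * (⟪β s, T s⟫ * Real.sin (x s) + ⟪β s, N s⟫ * Real.cos (x s))) s := by
    intro s
    have h := HasDerivAt.inner ℝ (hβ' s) (hβ' s)
    refine h.congr_deriv ?_
    simp only [inner_add_left, inner_add_right, real_inner_smul_left, real_inner_smul_right]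
    rw [real_inner_comm (β s) (T s), real_inner_comm (β s) (N s)]
    ring
  intro s
  have ea₁ := (da₁ s).deriv
  have ea₂ := (da₂ s).deriv
  have ea₃ := (da₃ s).deriv
  have eD := (dDfun s).deriv
  have hDhalf : (fun t => deriv (fun s => (⟪β s, β s⟫ : ℝ)) t / 2) =
      fun t => ⟪β t, T t⟫ * Real.sin (x t) + ⟪β t, N t⟫ * Real.cos (x t) := by
    funext t
    rw [(dDfun t).deriv]; ring
  have hτ : τ s ≠ 0 := fun h => hτcos s (by rw [h]; ring)
  have hcos : Real.cos (x s) ≠ 0 := fun h => hτcos s (by rw [h]; ring)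
  -- second derivative of D/2
  have dg : HasDerivAt (fun t => ⟪β t, T t⟫ * Real.sin (x t) + ⟪β t, N t⟫ * Real.cos (x t))
      (1 + τ s * ⟪β s, B s⟫ * Real.cos (x s)) s := by
    have h := ((da₁ s).mul ((hx s).sin)).add ((da₂ s).mul ((hx s).cos))
    refine h.congr_deriv ?_
    have := Real.sin_sq_add_cos_sq (x s)
    nlinarith [this]
  have e2 : deriv (fun t => deriv (fun s => (⟪β s, β s⟫ : ℝ)) t / 2) s
      = 1 + τ s * ⟪β s, B s⟫ * Real.cos (x s) := by
    rw [hDhalf]; exact dg.deriv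
  refine ⟨⟨?_, ?_, ?_⟩, ?_, ?_, ?_, ?_⟩
  · rw [ea₁]; ring
  · rw [ea₂]; ring
  · rw [ea₃]; ring
  · rw [eD]; ring
  · rw [e2]; field_simp; ring
  · rw [ea₃]; field_simp
  · rw [ea₁, ea₃]; field_simp; ring
end

section
/- Let α : ℝ → EuclideanSpace ℝ (Fin 3) be a unit-speed curve with orthonormal Frenet frame T, N, B satisfying T' = κN, N' = −κT + τB, B' = −τN with κ > 0, let x be an antiderivative of κ, and assume τ(s)·cos(x(s)) ≠ 0 for all s. Let β : ℝ → EuclideanSpace ℝ (Fin 3) be smooth with β'(s) = sin(x(s))·T(s) + cos(x(s))·N(s) for all s ∈ ℝ. Then there exists a constant a > 0 with ‖β(s)‖ = a for all s ∈ ℝ (i.e., the osculating mate β is a spherical curve) if and only if ⟨β(s), B(s)⟩ = −1/(τ(s)·cos(x(s))) for all s ∈ ℝ. -/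
open Real
open scoped RealInnerProductSpace

/-- The osculating mate `β` (with `β' = sin(x)T + cos(x)N`, `x' = κ`,
`τ·cos(x) ≠ 0`) of a unit-speed Frenet curve `α` is a spherical curve, i.e. `‖β‖` is a
positive constant, iff `⟨β, B⟩ = −1/(τ·cos(x))` identically. -/
theorem osculating_mate_spherical_iff_binormal_component
    (α β T N B : ℝ → EuclideanSpace ℝ (Fin 3)) (κ τ x : ℝ → ℝ)
    (hα : ContDiff ℝ (⊤ : ℕ∞) α) (hβ : ContDiff ℝ (⊤ : ℕ∞) β)
    (hT : ∀ s, HasDerivAt α (T s) s)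
    (hTT : ∀ s, ⟪T s, T s⟫ = 1) (hNN : ∀ s, ⟪N s, N s⟫ = 1)
    (hBB : ∀ s, ⟪B s, B s⟫ = 1)
    (hTN : ∀ s, ⟪T s, N s⟫ = 0) (hTB : ∀ s, ⟪T s, B s⟫ = 0)
    (hNB : ∀ s, ⟪N s, B s⟫ = 0)
    (hκpos : ∀ s, 0 < κ s)
    (hT' : ∀ s, HasDerivAt T (κ s • N s) s)
    (hN' : ∀ s, HasDerivAt N (-(κ s) • T s + τ s • B s) s)
    (hB' : ∀ s, HasDerivAt B (-(τ s) • N s) s)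
    (hx : ∀ s, HasDerivAt x (κ s) s)
    (hτcos : ∀ s, τ s * Real.cos (x s) ≠ 0)
    (hβ' : ∀ s, HasDerivAt β (Real.sin (x s) • T s + Real.cos (x s) • N s) s) :
    (∃ a : ℝ, 0 < a ∧ ∀ s, ‖β s‖ = a) ↔
      (∀ s, ⟪β s, B s⟫ = -1 / (τ s * Real.cos (x s))) := by
  -- component derivatives
  have ht' : ∀ s, HasDerivAt (fun u => ⟪β u, T u⟫)
      (Real.sin (x s) + κ s * ⟪β s, N s⟫) s := by
    intro s
    have h := (hβ' s).inner ℝ (hT' s)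
    refine HasDerivAt.congr_deriv h ?_
    simp only [inner_add_left, real_inner_smul_left, real_inner_smul_right]
    rw [hTT s, real_inner_comm (T s) (N s), hTN s]
    ring
  have hn' : ∀ s, HasDerivAt (fun u => ⟪β u, N u⟫)
      (Real.cos (x s) - κ s * ⟪β s, T s⟫ + τ s * ⟪β s, B s⟫) s := by
    intro s
    have h := (hβ' s).inner ℝ (hN' s)
    refine HasDerivAt.congr_deriv h ?_
    simp only [inner_add_left, inner_add_right, real_inner_smul_left,
      real_inner_smul_right, inner_neg_right, inner_smul_right, neg_smul]
    rw [hNN s, hTN s]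
    ring
  have hb' : ∀ s, HasDerivAt (fun u => ⟪β u, B u⟫) (-(τ s) * ⟪β s, N s⟫) s := by
    intro s
    have h := (hβ' s).inner ℝ (hB' s)
    refine HasDerivAt.congr_deriv h ?_
    simp only [inner_add_left, real_inner_smul_left, real_inner_smul_right,
      inner_neg_right, inner_smul_right, neg_smul]
    rw [hTB s, hNB s]
    ring
  -- the auxiliary function g
  set g : ℝ → ℝ := fun u => Real.sin (x u) * ⟪β u, T u⟫ + Real.cos (x u) * ⟪β u, N u⟫
    with hg_def
  have hg' : ∀ s, HasDerivAt g (1 + τ s * Real.cos (x s) * ⟪β s, B s⟫) s := by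
    intro s
    have h := (((hx s).sin).mul (ht' s)).add (((hx s).cos).mul (hn' s))
    refine HasDerivAt.congr_deriv h ?_
    have := sin_sq_add_cos_sq (x s)
    nlinarith [this]
  have hf' : ∀ s, HasDerivAt (fun u => ⟪β u, β u⟫) (2 * g s) s := by
    intro s
    have h := (hβ' s).inner ℝ (hβ' s)
    refine HasDerivAt.congr_deriv h ?_
    simp only [hg_def, inner_add_left, inner_add_right, real_inner_smul_left,
      real_inner_smul_right]
    rw [real_inner_comm (T s) (β s), real_inner_comm (N s) (β s)]
    ring
  constructor
  · rintro ⟨a, ha, hnorm⟩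
    -- ‖β‖² is constant
    have hfc : (fun u => ⟪β u, β u⟫) = fun _ => a ^ 2 := by
      funext u
      rw [real_inner_self_eq_norm_sq, hnorm u]
    have hg0 : ∀ s, g s = 0 := by
      intro s
      have h1 : HasDerivAt (fun u => ⟪β u, β u⟫) 0 s := by
        rw [hfc]; exact hasDerivAt_const _ _
      have := (hf' s).unique h1
      linarith
    intro s
    have h1 : HasDerivAt g 0 s := by
      have : g = fun _ => (0 : ℝ) := funext hg0
      rw [this]; exact hasDerivAt_const _ _
    have h2 := (hg' s).unique h1
    rw [eq_div_iff (hτcos s)]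
    linear_combination h2
  · intro hb
    have hg0 : ∀ s, HasDerivAt g 0 s := by
      intro s
      have h := hg' s
      rw [hb s] at h
      obtain ⟨hτ0, hcos0⟩ := mul_ne_zero_iff.mp (hτcos s)
      convert h using 1
      rw [show τ s * Real.cos (x s) * (-1 / (τ s * Real.cos (x s))) = -1 from by
        field_simp]
      ring
    -- g is constant
    have hgc : ∀ s, g s = g 0 :=
      fun s => is_const_of_deriv_eq_zero (fun u => (hg0 u).differentiableAt)
        (fun u => (hg0 u).deriv) s 0
    -- f s = f 0 + 2 * g 0 * s
    have hF : ∀ s, ⟪β s, β s⟫ = ⟪β (0:ℝ), β (0:ℝ)⟫ + 2 * g 0 * s := by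
      intro s
      have hD : ∀ u, HasDerivAt (fun v => ⟪β v, β v⟫ - 2 * g 0 * v) 0 u := by
        intro u
        have h1 := (hf' u).sub ((hasDerivAt_id u).const_mul (2 * g 0))
        rw [hgc u] at h1
        simpa [Pi.sub_def] using h1
      have := is_const_of_deriv_eq_zero (fun u => (hD u).differentiableAt)
        (fun u => (hD u).deriv) s 0
      simp only [mul_zero, sub_zero] at this
      linarith
    -- g 0 = 0 since ⟪β,β⟫ ≥ 0
    have hc0 : g 0 = 0 := by
      by_contra hc
      set c := g 0 with hcdef
      have h2c : (2 : ℝ) * c ≠ 0 := by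
        simp [hcdef]; exact hc
      set f0 : ℝ := ⟪β (0:ℝ), β (0:ℝ)⟫ with hf0
      set s₀ : ℝ := (-f0 - 1) / (2 * c) with hs₀
      have hval : ⟪β s₀, β s₀⟫ = -1 := by
        rw [hF s₀, hs₀]
        field_simp
        ring
      have := real_inner_self_nonneg (x := β s₀)
      rw [hval] at this
      linarith
    -- hence ⟪β,β⟫ is constant
    have hconst : ∀ s, ⟪β s, β s⟫ = ⟪β (0:ℝ), β (0:ℝ)⟫ := by
      intro s; have := hF s; rw [hc0] at this; simpa using this
    refine ⟨‖β (0:ℝ)‖, ?_, ?_⟩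
    · -- positivity: |⟪β 0, B 0⟫| ≤ ‖β 0‖ and ⟪β 0, B 0⟫ ≠ 0
      have hBnorm : ‖B (0:ℝ)‖ = 1 := by
        have := hBB (0:ℝ)
        rw [real_inner_self_eq_norm_sq] at this
        nlinarith [norm_nonneg (B (0:ℝ))]
      have hb0 : ⟪β (0:ℝ), B (0:ℝ)⟫ ≠ 0 := by
        rw [hb 0]
        simp [hτcos 0]
      have hcs := abs_real_inner_le_norm (β (0:ℝ)) (B (0:ℝ))
      rw [hBnorm, mul_one] at hcs
      have : 0 < |⟪β (0:ℝ), B (0:ℝ)⟫| := abs_pos.mpr hb0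
      linarith
    · intro s
      have h1 : ‖β s‖ ^ 2 = ‖β (0:ℝ)‖ ^ 2 := by
        rw [← real_inner_self_eq_norm_sq, ← real_inner_self_eq_norm_sq]
        exact hconst s
      exact (pow_left_inj₀ (norm_nonneg _) (norm_nonneg _) two_ne_zero).mp h1
end

section
/- Let κ, τ, x : ℝ → ℝ be smooth with κ(s) > 0, τ(s) > 0 and x'(s) = κ(s) for all s, let ε₁ ∈ {−1,1}, and set κ̄ = ε₁·τ·cos(x), τ̄ = τ·sin(x), with κ̄(s) > 0 for all s, and σ̄ = (κ̄²/(κ̄² + τ̄²)^(3/2))·(τ̄/κ̄)'. Then there exist constants ς₁ ≠ 0 and ς₂ with ς₁·κ(s) + ς₂·τ(s) = 1 for all s (i.e., α is a Bertrand curve) if and only if there exist constants ς₁ ≠ 0 and ς₂ with ε₁·ς₁·σ̄(s) + ς₂ = 1/√(κ̄(s)² + τ̄(s)²) for all s. -/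
open Real

/-- With `κ̄ = ε₁·τ·cos(x)`, `τ̄ = τ·sin(x)` (`x' = κ > 0`, `τ > 0`,
`κ̄ > 0`) and `σ̄ = (κ̄²/(κ̄² + τ̄²)^(3/2))·(τ̄/κ̄)'`, the base curve `α` is a Bertrand
curve, i.e. `ς₁·κ + ς₂·τ = 1` for constants `ς₁ ≠ 0`, `ς₂`, iff
`ε₁·ς₁·σ̄ + ς₂ = 1/√(κ̄² + τ̄²)` for constants `ς₁ ≠ 0`, `ς₂`. -/
theorem base_bertrand_iff
    (κ τ x : ℝ → ℝ)
    (hκ : ContDiff ℝ (⊤ : ℕ∞) κ) (hτ : ContDiff ℝ (⊤ : ℕ∞) τ)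
    (hx : ContDiff ℝ (⊤ : ℕ∞) x)
    (hκpos : ∀ s, 0 < κ s) (hτpos : ∀ s, 0 < τ s) (hx' : ∀ s, deriv x s = κ s)
    (ε₁ : ℝ) (hε : ε₁ = -1 ∨ ε₁ = 1)
    (κb τb σb : ℝ → ℝ)
    (hκb : ∀ s, κb s = ε₁ * τ s * Real.cos (x s))
    (hτb : ∀ s, τb s = τ s * Real.sin (x s))
    (hκbpos : ∀ s, 0 < κb s)
    (hσb : ∀ s, σb s =
      κb s ^ 2 / (κb s ^ 2 + τb s ^ 2) ^ ((3 : ℝ) / 2) * deriv (fun t => τb t / κb t) s) :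
    (∃ ς₁ ς₂ : ℝ, ς₁ ≠ 0 ∧ ∀ s, ς₁ * κ s + ς₂ * τ s = 1) ↔
      (∃ ς₁ ς₂ : ℝ, ς₁ ≠ 0 ∧
        ∀ s, ε₁ * ς₁ * σb s + ς₂ = 1 / Real.sqrt (κb s ^ 2 + τb s ^ 2)) := by
  have hε2 : ε₁ * ε₁ = 1 := by rcases hε with h | h <;> rw [h] <;> norm_num
  have hεne : ε₁ ≠ 0 := by rcases hε with h | h <;> rw [h] <;> norm_num
  have hτne : ∀ s, τ s ≠ 0 := fun s => (hτpos s).ne'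
  have hcos : ∀ s, Real.cos (x s) ≠ 0 := by
    intro s h
    have := hκbpos s
    rw [hκb s, h, mul_zero] at this
    exact lt_irrefl 0 this
  have hsum : ∀ s, κb s ^ 2 + τb s ^ 2 = τ s ^ 2 := by
    intro s
    rw [hκb s, hτb s]
    rcases hε with h | h <;> rw [h] <;> nlinarith [Real.sin_sq_add_cos_sq (x s)]
  have hfun : (fun t => τb t / κb t) = fun t => ε₁ * Real.tan (x t) := by
    funext t
    rw [hκb t, hτb t, Real.tan_eq_sin_div_cos]
    rcases hε with h | h <;> rw [h] <;> field_simp [hτne t, hcos t] <;> ring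
  have hderiv : ∀ s, deriv (fun t => τb t / κb t) s = ε₁ * (κ s / Real.cos (x s) ^ 2) := by
    intro s
    rw [hfun]
    have hxd : HasDerivAt x (κ s) s := by
      have h1 : DifferentiableAt ℝ x s := (hx.differentiable (by simp)).differentiableAt
      have := h1.hasDerivAt
      rwa [hx' s] at this
    have ht : HasDerivAt (fun t => Real.tan (x t)) (1 / Real.cos (x s) ^ 2 * κ s) s :=
      (Real.hasDerivAt_tan (hcos s)).comp s hxd
    have := (ht.const_mul ε₁).deriv
    rw [this]; ring
  have hσ : ∀ s, σb s = ε₁ * (κ s / τ s) := by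
    intro s
    rw [hσb s, hderiv s, hsum s]
    have h32 : ((τ s ^ 2 : ℝ)) ^ ((3 : ℝ) / 2) = τ s ^ 3 := by
      rw [← Real.rpow_natCast (τ s) 2, ← Real.rpow_mul (hτpos s).le]
      norm_num
    rw [h32, hκb s]
    rcases hε with h | h <;> rw [h] <;> field_simp [hτne s, hcos s] <;> ring
  have hsqrt : ∀ s, Real.sqrt (κb s ^ 2 + τb s ^ 2) = τ s := by
    intro s
    rw [hsum s, Real.sqrt_sq (hτpos s).le]
  have key : ∀ (a b : ℝ) (s : ℝ),
      (ε₁ * a * σb s + b = 1 / Real.sqrt (κb s ^ 2 + τb s ^ 2)) ↔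
      (a * κ s + b * τ s = 1) := by
    intro a b s
    rw [hσ s, hsqrt s]
    rw [show ε₁ * a * (ε₁ * (κ s / τ s)) = a * (κ s / τ s) by
      rw [show ε₁ * a * (ε₁ * (κ s / τ s)) = (ε₁ * ε₁) * (a * (κ s / τ s)) by ring, hε2,
        one_mul]]
    constructor
    · intro h
      field_simp [hτne s] at h
      linarith
    · intro h
      field_simp [hτne s]
      linarith
  constructor
  · rintro ⟨a, b, ha, h⟩
    exact ⟨a, b, ha, fun s => (key a b s).mpr (h s)⟩
  · rintro ⟨a, b, ha, h⟩
    exact ⟨a, b, ha, fun s => (key a b s).mp (h s)⟩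
end

section
/- Let κ, τ, x : ℝ → ℝ be smooth with κ(s) > 0, τ(s) > 0 and x'(s) = κ(s) for all s, let ε₁ ∈ {−1,1}, and set κ̄ = ε₁·τ·cos(x), τ̄ = τ·sin(x), with κ̄(s) > 0 for all s, and σ̄ = (κ̄²/(κ̄² + τ̄²)^(3/2))·(τ̄/κ̄)'. Then there exists a constant λ₂ ≠ 0 with κ(s) = λ₂·(κ(s)² + τ(s)²) for all s (i.e., α is a Mannheim curve) if and only if there exists a constant λ ≠ 0 with ε₁·σ̄(s) = λ·√(κ̄(s)² + τ̄(s)²)·(1 + σ̄(s)²) for all s. -/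
open Real

/-- With `κ̄ = ε₁·τ·cos(x)`, `τ̄ = τ·sin(x)` (`x' = κ > 0`, `τ > 0`,
`κ̄ > 0`) and `σ̄ = (κ̄²/(κ̄² + τ̄²)^(3/2))·(τ̄/κ̄)'`, the base curve `α` is a Mannheim
curve, i.e. `κ = λ₂·(κ² + τ²)` for a constant `λ₂ ≠ 0`, iff
`ε₁·σ̄ = λ·√(κ̄² + τ̄²)·(1 + σ̄²)` for a constant `λ ≠ 0`. -/
theorem base_mannheim_iff
    (κ τ x : ℝ → ℝ)
    (hκ : ContDiff ℝ (⊤ : ℕ∞) κ) (hτ : ContDiff ℝ (⊤ : ℕ∞) τ)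
    (hx : ContDiff ℝ (⊤ : ℕ∞) x)
    (hκpos : ∀ s, 0 < κ s) (hτpos : ∀ s, 0 < τ s) (hx' : ∀ s, deriv x s = κ s)
    (ε₁ : ℝ) (hε : ε₁ = -1 ∨ ε₁ = 1)
    (κb τb σb : ℝ → ℝ)
    (hκb : ∀ s, κb s = ε₁ * τ s * Real.cos (x s))
    (hτb : ∀ s, τb s = τ s * Real.sin (x s))
    (hκbpos : ∀ s, 0 < κb s)
    (hσb : ∀ s, σb s =
      κb s ^ 2 / (κb s ^ 2 + τb s ^ 2) ^ ((3 : ℝ) / 2) * deriv (fun t => τb t / κb t) s) :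
    (∃ lam₂ : ℝ, lam₂ ≠ 0 ∧ ∀ s, κ s = lam₂ * (κ s ^ 2 + τ s ^ 2)) ↔
      (∃ lam : ℝ, lam ≠ 0 ∧
        ∀ s, ε₁ * σb s = lam * Real.sqrt (κb s ^ 2 + τb s ^ 2) * (1 + σb s ^ 2)) := by
  have hε2 : ε₁ * ε₁ = 1 := by rcases hε with h | h <;> rw [h] <;> norm_num
  have hτne : ∀ s, τ s ≠ 0 := fun s => (hτpos s).ne'
  have hcos : ∀ s, Real.cos (x s) ≠ 0 := by
    intro s h
    have := hκbpos s
    rw [hκb s, h] at this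
    simp at this
  have hεne : ε₁ ≠ 0 := by rcases hε with h | h <;> rw [h] <;> norm_num
  have hsum : ∀ s, κb s ^ 2 + τb s ^ 2 = τ s ^ 2 := by
    intro s
    rw [hκb s, hτb s]
    have h1 := Real.sin_sq_add_cos_sq (x s)
    linear_combination (τ s) ^ 2 * h1 + (τ s * Real.cos (x s)) ^ 2 * hε2
  have hratio : (fun t => τb t / κb t) = fun t => ε₁ * Real.tan (x t) := by
    funext t
    rw [hτb t, hκb t, Real.tan_eq_sin_div_cos]
    rcases hε with h | h <;> rw [h] <;> field_simp [hτne t, hcos t] <;> ring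
  have hderiv : ∀ s, deriv (fun t => τb t / κb t) s = ε₁ * (κ s / Real.cos (x s) ^ 2) := by
    intro s
    rw [hratio]
    have hxd : HasDerivAt x (κ s) s := by
      rw [← hx' s]
      exact ((hx.differentiable (by simp)) s).hasDerivAt
    have htan : HasDerivAt Real.tan (1 / Real.cos (x s) ^ 2) (x s) :=
      Real.hasDerivAt_tan (hcos s)
    have h2 : HasDerivAt (fun t => ε₁ * Real.tan (x t))
        (ε₁ * (1 / Real.cos (x s) ^ 2 * κ s)) s := (htan.comp s hxd).const_mul ε₁
    rw [h2.deriv]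
    ring
  have hpow : ∀ s, (τ s ^ 2 : ℝ) ^ ((3 : ℝ) / 2) = τ s ^ 3 := by
    intro s
    rw [← Real.rpow_natCast (τ s) 2, ← Real.rpow_mul (hτpos s).le,
      ← Real.rpow_natCast (τ s) 3]
    norm_num
  have hσ : ∀ s, σb s = ε₁ * κ s / τ s := by
    intro s
    rw [hσb s, hderiv s, hsum s, hpow s, hκb s]
    have hc := hcos s
    have ht := hτne s
    field_simp
    rcases hε with h | h <;> rw [h] <;> ring
  have hsqrt : ∀ s, Real.sqrt (κb s ^ 2 + τb s ^ 2) = τ s := by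
    intro s
    rw [hsum s, Real.sqrt_sq (hτpos s).le]
  constructor
  · rintro ⟨l, hl, h⟩
    refine ⟨l, hl, fun s => ?_⟩
    rw [hσ s, hsqrt s]
    have hs := h s
    have ht := hτne s
    field_simp
    rcases hε with hh | hh <;> rw [hh] <;> ring_nf <;> nlinarith [hs, hτpos s]
  · rintro ⟨l, hl, h⟩
    refine ⟨l, hl, fun s => ?_⟩
    have hs := h s
    rw [hσ s, hsqrt s] at hs
    have ht := hτne s
    field_simp at hs
    have h2 : τ s ^ 2 * κ s = τ s ^ 2 * (l * (κ s ^ 2 + τ s ^ 2)) := by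
      rcases hε with hh | hh <;> rw [hh] at hs <;> linear_combination τ s ^ 2 * hs
    exact mul_left_cancel₀ (pow_ne_zero 2 ht) h2
end

section
/- Let κ, τ, x : ℝ → ℝ be smooth with κ(s) > 0, τ(s) > 0 and x'(s) = κ(s) for all s, let ε₁ ∈ {−1,1}, and set κ̄ = ε₁·τ·cos(x), τ̄ = τ·sin(x), with κ̄(s) > 0 for all s. Define the curvature and torsion of the tangent indicatrix of the osculating mate β by κ_T̄ = √(κ̄² + τ̄²)/κ̄ and τ_T̄ = (κ̄/(κ̄² + τ̄²))·(τ̄/κ̄)'. Then τ_T̄(s)/κ_T̄(s) = σ̄(s) = ε₁·κ(s)/τ(s) for all s, where σ̄ = (κ̄²/(κ̄² + τ̄²)^(3/2))·(τ̄/κ̄)'. Consequently, the following are equivalent: (i) τ_T̄/κ_T̄ is constant (the tangent indicatrix of β is a general helix); (ii) σ̄ is constant (β is a slant helix); (iii) τ/κ is constant (α is a general helix). -/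
open Real

/-- With `κ̄ = ε₁·τ·cos(x)`, `τ̄ = τ·sin(x)` (`x' = κ > 0`, `τ > 0`,
`κ̄ > 0`), tangent-indicatrix curvatures `κ_T̄ = √(κ̄² + τ̄²)/κ̄`,
`τ_T̄ = (κ̄/(κ̄² + τ̄²))·(τ̄/κ̄)'`, and `σ̄ = (κ̄²/(κ̄² + τ̄²)^(3/2))·(τ̄/κ̄)'`, one has
`τ_T̄/κ_T̄ = σ̄ = ε₁·κ/τ`; hence the following are equivalent: the tangent indicatrix of
`β` is a general helix (`τ_T̄/κ_T̄` constant), `β` is a slant helix (`σ̄` constant), and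
`α` is a general helix (`τ/κ` constant). -/
theorem tangent_indicatrix_helix_equivalences
    (κ τ x : ℝ → ℝ)
    (hκ : ContDiff ℝ (⊤ : ℕ∞) κ) (hτ : ContDiff ℝ (⊤ : ℕ∞) τ)
    (hx : ContDiff ℝ (⊤ : ℕ∞) x)
    (hκpos : ∀ s, 0 < κ s) (hτpos : ∀ s, 0 < τ s) (hx' : ∀ s, deriv x s = κ s)
    (ε₁ : ℝ) (hε : ε₁ = -1 ∨ ε₁ = 1)
    (κb τb σb κT τT : ℝ → ℝ)
    (hκb : ∀ s, κb s = ε₁ * τ s * Real.cos (x s))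
    (hτb : ∀ s, τb s = τ s * Real.sin (x s))
    (hκbpos : ∀ s, 0 < κb s)
    (hσb : ∀ s, σb s =
      κb s ^ 2 / (κb s ^ 2 + τb s ^ 2) ^ ((3 : ℝ) / 2) * deriv (fun t => τb t / κb t) s)
    (hκT : ∀ s, κT s = Real.sqrt (κb s ^ 2 + τb s ^ 2) / κb s)
    (hτT : ∀ s, τT s = κb s / (κb s ^ 2 + τb s ^ 2) * deriv (fun t => τb t / κb t) s) :
    (∀ s, τT s / κT s = σb s ∧ σb s = ε₁ * κ s / τ s) ∧
    ((∃ c : ℝ, ∀ s, τT s / κT s = c) ↔ (∃ c : ℝ, ∀ s, σb s = c)) ∧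
    ((∃ c : ℝ, ∀ s, σb s = c) ↔ (∃ c : ℝ, ∀ s, τ s / κ s = c)) := by
  have hε2 : ε₁ * ε₁ = 1 := by rcases hε with h | h <;> rw [h] <;> norm_num
  have hεne : ε₁ ≠ 0 := by rcases hε with h | h <;> rw [h] <;> norm_num
  have hτne : ∀ s, τ s ≠ 0 := fun s => (hτpos s).ne'
  have hcos : ∀ s, Real.cos (x s) ≠ 0 := by
    intro s h
    have := hκbpos s
    rw [hκb s, h, mul_zero] at this
    exact lt_irrefl 0 this
  have hfun : (fun t => τb t / κb t) = fun t => ε₁ * Real.tan (x t) := by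
    funext t
    rw [hκb t, hτb t, Real.tan_eq_sin_div_cos]
    have h1 : ε₁ * τ t * Real.cos (x t) ≠ 0 := by
      exact mul_ne_zero (mul_ne_zero hεne (hτne t)) (hcos t)
    rw [← mul_div_assoc, div_eq_div_iff h1 (hcos t)]
    linear_combination -(τ t * Real.sin (x t) * Real.cos (x t)) * hε2
  have hsum : ∀ s, κb s ^ 2 + τb s ^ 2 = τ s ^ 2 := by
    intro s
    rw [hκb s, hτb s]
    linear_combination (τ s * Real.cos (x s)) ^ 2 * hε2
      + τ s ^ 2 * Real.sin_sq_add_cos_sq (x s)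
  have hpow : ∀ s, ((τ s) ^ 2 : ℝ) ^ ((3 : ℝ) / 2) = τ s ^ 3 := by
    intro s
    rw [← Real.rpow_natCast (τ s) 2, ← Real.rpow_mul (hτpos s).le]
    norm_num
  have hD : ∀ s, deriv (fun t => τb t / κb t) s = ε₁ * (κ s / Real.cos (x s) ^ 2) := by
    intro s
    rw [hfun]
    have hxd : HasDerivAt x (κ s) s := by
      have h := (hx.differentiable (by simp)).differentiableAt (x := s)
      rw [← hx' s]; exact h.hasDerivAt
    have ht : HasDerivAt (fun t => Real.tan (x t)) (1 / Real.cos (x s) ^ 2 * κ s) s :=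
      (Real.hasDerivAt_tan (hcos s)).comp s hxd
    rw [(ht.const_mul ε₁).deriv]; ring
  have hσ : ∀ s, σb s = ε₁ * κ s / τ s := by
    intro s
    rw [hσb s, hD s, hsum s, hpow s, hκb s]
    have h2 := hcos s
    have h3 := hτne s
    field_simp
    ring_nf
    linear_combination (κ s) * hε2
  have hTK : ∀ s, τT s / κT s = σb s := by
    intro s
    rw [hτT s, hκT s, hσb s, hsum s, hpow s, Real.sqrt_sq (hτpos s).le]
    have hτ0 := hτne s
    have hκb0 := (hκbpos s).ne'
    field_simp
  refine ⟨fun s => ⟨hTK s, hσ s⟩, ?_, ?_⟩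
  · constructor
    · rintro ⟨c, hc⟩; exact ⟨c, fun s => by rw [← hTK s]; exact hc s⟩
    · rintro ⟨c, hc⟩; exact ⟨c, fun s => by rw [hTK s]; exact hc s⟩
  · have key : ∀ c : ℝ, (∀ s, σb s = c) → ∀ s, τ s / κ s = ε₁ / c := by
      intro c hc s
      have h1 := hc s
      rw [hσ s] at h1
      have hc0 : c ≠ 0 := by
        intro h
        rw [h, div_eq_zero_iff] at h1
        rcases h1 with h1 | h1
        · exact absurd (mul_eq_zero.mp h1)
            (by push_neg; exact ⟨hεne, (hκpos s).ne'⟩)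
        · exact hτne s h1
      rw [← h1]
      have hκ0 := (hκpos s).ne'
      have hτ0 := hτne s
      rw [div_div_eq_mul_div, div_eq_div_iff hκ0 (mul_ne_zero hεne hκ0)]
      ring
    constructor
    · rintro ⟨c, hc⟩
      have hc0 : c ≠ 0 := by
        have h1 := hc 0
        rw [hσ 0] at h1
        intro h
        rw [h, div_eq_zero_iff] at h1
        rcases h1 with h1 | h1
        · exact absurd (mul_eq_zero.mp h1)
            (by push_neg; exact ⟨hεne, (hκpos 0).ne'⟩)
        · exact hτne 0 h1
      exact ⟨ε₁ / c, key c hc⟩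
    · rintro ⟨c, hc⟩
      refine ⟨ε₁ / c, fun s => ?_⟩
      have h1 := hc s
      have hc0 : c ≠ 0 := by
        intro h
        rw [h, div_eq_zero_iff] at h1
        rcases h1 with h1 | h1
        · exact hτne s h1
        · exact (hκpos s).ne' h1
      rw [hσ s, ← h1]
      have hκ0 := (hκpos s).ne'
      have hτ0 := hτne s
      field_simp
end

section
/- Let β : ℝ → EuclideanSpace ℝ (Fin 3) be a unit-speed curve with orthonormal Frenet frame T̄ = β', N̄, B̄ satisfying the Frenet equations T̄' = κ̄N̄, N̄' = −κ̄T̄ + τ̄B̄, B̄' = −τ̄N̄ with κ̄ > 0. Suppose there exist differentiable functions ζ, η : ℝ → ℝ such that β(s) = ζ(s)·T̄(s) + η(s)·B̄(s) for all s (the position vector of β always lies in its rectifying plane). Then: (i) η is constant, η ≡ a; (ii) ζ'(s) = 1 for all s, so ζ(s) = s + b for some constant b; (iii) ζ(s)·κ̄(s) − a·τ̄(s) = 0 for all s; and consequently (iv) β(s) = a·((τ̄(s)/κ̄(s))·T̄(s) + B̄(s)), i.e., the position vector of β is a constant multiple of the modified Darboux vector D̃ = (τ̄/κ̄)T̄ +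 B̄ of β. -/
open Real
open scoped RealInnerProductSpace

/-- If a unit-speed Frenet curve `β` with frame `T̄ = β'`, `N̄`, `B̄`,
curvature `κ̄ > 0` and torsion `τ̄` has its position vector always in its rectifying
plane, `β = ζ·T̄ + η·B̄`, then `η ≡ a` is constant, `ζ' ≡ 1` (so `ζ(s) = s + b`),
`ζ·κ̄ − a·τ̄ = 0`, and `β = a·((τ̄/κ̄)·T̄ + B̄)` is a constant multiple of the modified
Darboux vector of `β`. -/
theorem rectifying_position_modified_darboux
    (β Tb Nb Bb : ℝ → EuclideanSpace ℝ (Fin 3)) (κb τb : ℝ → ℝ)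
    (hβ : ContDiff ℝ (⊤ : ℕ∞) β)
    (hTb : ∀ s, HasDerivAt β (Tb s) s)
    (hTT : ∀ s, ⟪Tb s, Tb s⟫ = 1) (hNN : ∀ s, ⟪Nb s, Nb s⟫ = 1)
    (hBB : ∀ s, ⟪Bb s, Bb s⟫ = 1)
    (hTN : ∀ s, ⟪Tb s, Nb s⟫ = 0) (hTB : ∀ s, ⟪Tb s, Bb s⟫ = 0)
    (hNB : ∀ s, ⟪Nb s, Bb s⟫ = 0)
    (hκbpos : ∀ s, 0 < κb s)
    (hTb' : ∀ s, HasDerivAt Tb (κb s • Nb s) s)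
    (hNb' : ∀ s, HasDerivAt Nb (-(κb s) • Tb s + τb s • Bb s) s)
    (hBb' : ∀ s, HasDerivAt Bb (-(τb s) • Nb s) s)
    (ζ η : ℝ → ℝ) (hζ : Differentiable ℝ ζ) (hη : Differentiable ℝ η)
    (hpos : ∀ s, β s = ζ s • Tb s + η s • Bb s) :
    ∃ a b : ℝ,
      (∀ s, η s = a) ∧
      (∀ s, deriv ζ s = 1) ∧ (∀ s, ζ s = s + b) ∧
      (∀ s, ζ s * κb s - a * τb s = 0) ∧
      (∀ s, β s = a • ((τb s / κb s) • Tb s + Bb s)) := by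
  have hNT : ∀ s, ⟪Nb s, Tb s⟫ = 0 := fun s => by rw [real_inner_comm]; exact hTN s
  have hBT : ∀ s, ⟪Bb s, Tb s⟫ = 0 := fun s => by rw [real_inner_comm]; exact hTB s
  have hBN : ∀ s, ⟪Bb s, Nb s⟫ = 0 := fun s => by rw [real_inner_comm]; exact hNB s
  have key : ∀ s, Tb s = deriv ζ s • Tb s + deriv η s • Bb s
      + (ζ s * κb s - η s * τb s) • Nb s := by
    intro s
    have h1 := ((hζ s).hasDerivAt.smul (hTb' s)).add ((hη s).hasDerivAt.smul (hBb' s))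
    have h2 : HasDerivAt (fun t => ζ t • Tb t + η t • Bb t) (Tb s) s := by
      refine (hTb s).congr_of_eventuallyEq ?_
      filter_upwards with t using (hpos t).symm
    have h4 := h1.unique h2
    linear_combination (norm := module) - h4
  have innN : ∀ s, ζ s * κb s - η s * τb s = 0 := by
    intro s
    have h := congrArg (fun v => ⟪Nb s, v⟫) (key s)
    simp only [inner_add_right, inner_smul_right, hNT, hNB, hNN, mul_zero, mul_one,
      zero_add, add_zero] at h
    linarith [h]
  have innT : ∀ s, deriv ζ s = 1 := by
    intro s
    have h := congrArg (fun v => ⟪Tb s, v⟫) (key s)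
    simp only [inner_add_right, inner_smul_right, hTT, hTB, hTN, mul_zero, mul_one,
      zero_add, add_zero] at h
    linarith [h]
  have innB : ∀ s, deriv η s = 0 := by
    intro s
    have h := congrArg (fun v => ⟪Bb s, v⟫) (key s)
    simp only [inner_add_right, inner_smul_right, hBT, hBB, hBN, mul_zero, mul_one,
      zero_add, add_zero] at h
    linarith [h]
  have hηconst : ∀ s, η s = η 0 := fun s => is_const_of_deriv_eq_zero hη innB s 0
  have hζform : ∀ s, ζ s = s + (ζ 0 - 0) := by
    have hd : Differentiable ℝ (fun t => ζ t - t) := hζ.sub differentiable_id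
    have hz : ∀ t, deriv (fun t => ζ t - t) t = 0 := by
      intro t
      have h1 : HasDerivAt (fun t => ζ t - t) (deriv ζ t - 1) t :=
        (hζ t).hasDerivAt.sub (hasDerivAt_id t)
      rw [h1.deriv, innT t, sub_self]
    intro s
    have := is_const_of_deriv_eq_zero hd hz s 0
    simp only [sub_zero] at this ⊢
    linarith [this]
  refine ⟨η 0, ζ 0 - 0, hηconst, innT, hζform, ?_, ?_⟩
  · intro s
    have := innN s
    rw [hηconst s] at this
    exact this
  · intro s
    have hκ := (hκbpos s).ne'
    have hζval : ζ s = η 0 * τb s / κb s := by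
      have := innN s
      rw [hηconst s] at this
      field_simp
      linarith [this]
    rw [hpos s, hηconst s, hζval]
    rw [smul_add, smul_smul]
    congr 1
    rw [mul_div_assoc]
end
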